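/- arXiv:2307.08517 — 5 statements merged into one kernel-verified Lean document; each statement's English description precedes it below -/
import Mathlib

section
/- Let Z = (Z_i)_{i≥0} be a Markov chain on a complete separable metric space (𝒳,d) with transition kernel P, unique invariant distribution π, and pseudo spectral gap γ_ps > 0, and suppose it satisfies the stationary Bernstein inequality P^π(Σ_{i=0}^{n−1}(f(Z_i)−π(f)) ≥ x) ≤ exp(−γ_ps x² / (8(n+γ_ps^{−1})σ²(f) + 20‖f−π(f)‖_∞ x)) for all bounded measurable f and x > 0, where σ²(f) := π(f²) − π(f)². If μ ≪ π with dμ/dπ ∈ L^p(π) for some p ∈ (1,∞], then for every bounded measurable f : 𝒳 → ℝ and x > 0, P^μ( Σ_{i=0}^{n−1}(f(Z_i) − π(f)) ≥ x ) ≤ ‖dμ/dπ‖_{L^p(π)} exp( −(1/p̄) · γ_ps x² / (8(n+γ_ps^{−1})σ²(f) + 20‖f−π(f)‖_∞ x) ). -/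
open MeasureTheory ProbabilityTheory
open scoped ENNReal

/-- Conjugate Hölder exponent: `p̄ = p/(p-1)` for finite `p`, and `p̄ = 1` for `p = ∞`. -/
noncomputable def conjExp (p : ℝ≥0∞) : ℝ :=
  if p = ∞ then 1 else p.toReal / (p.toReal - 1)

/-- Sup-norm deviation `‖f - π(f)‖_∞`. -/
noncomputable def supDev {X : Type*} [MeasurableSpace X] (π : Measure X) (f : X → ℝ) : ℝ :=
  ⨆ x, |f x - ∫ y, f y ∂π|

/-- Variance `σ²(f) = π(f²) - π(f)²`. -/
noncomputable def varPi {X : Type*} [MeasurableSpace X] (π : Measure X) (f : X → ℝ) : ℝ :=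
  (∫ y, f y ^ 2 ∂π) - (∫ y, f y ∂π) ^ 2

/-!
Write `P^μ = ρ(Z₀) · P^π` with `ρ = dμ/dπ`. For an event `A` of the path space, Hölder's
inequality with exponents `p` and `p̄` gives `P^μ(A) ≤ ‖ρ ∘ Z₀‖_{L^p(P^π)} P^π(A)^{1/p̄}`, and
`‖ρ ∘ Z₀‖_{L^p(P^π)} = ‖ρ‖_{L^p(π)}` because `Z₀ ∼ π` under `P^π`. Raising the stationary
Bernstein bound to the power `1/p̄` multiplies the exponent by `1/p̄`.
-/

theorem conjExp_eq_toReal_conjExponent {p : ℝ≥0∞} (hp : 1 < p) :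
    conjExp p = (ENNReal.conjExponent p).toReal := by
  rcases eq_or_ne p ∞ with rfl | hp_top
  · simp [conjExp, ENNReal.conjExponent]
  have hpr : 1 < p.toReal := by
    simpa using (ENNReal.toReal_lt_toReal ENNReal.one_ne_top hp_top).mpr hp
  have hsub : (p - 1).toReal = p.toReal - 1 := by
    rw [ENNReal.toReal_sub_of_le hp.le hp_top, ENNReal.toReal_one]
  have hsub_ne : p - 1 ≠ 0 := (tsub_pos_of_lt hp).ne'
  rw [conjExp, if_neg hp_top, ENNReal.conjExponent,
    ENNReal.toReal_add ENNReal.one_ne_top (ENNReal.inv_ne_top.mpr hsub_ne),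
    ENNReal.toReal_inv, hsub, ENNReal.toReal_one]
  field_simp [(sub_pos.mpr hpr).ne']
  ring

theorem ENNReal.ofReal_exp_rpow (t r : ℝ) :
    ENNReal.ofReal (Real.exp t) ^ r = ENNReal.ofReal (Real.exp (t * r)) := by
  rw [ENNReal.ofReal_rpow_of_pos (Real.exp_pos _), ← Real.exp_mul]

section Holder

variable {Ω : Type*} [MeasurableSpace Ω] {ν : Measure Ω} {p q : ℝ≥0∞} [p.HolderConjugate q]
  {A : Set Ω}

theorem setLIntegral_enorm_le_eLpNorm_mul_measure_rpow {E : Type*} [NormedAddCommGroup E]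
    [NormedSpace ℝ E] {φ : Ω → E} (hφ : AEStronglyMeasurable φ ν) (hA : MeasurableSet A) :
    ∫⁻ ω in A, ‖φ ω‖ₑ ∂ν ≤ eLpNorm φ p ν * ν A ^ (1 / q.toReal) := by
  have hindicator : A.indicator (fun _ => (1 : ℝ)) • φ = A.indicator φ := by
    ext ω
    by_cases h : ω ∈ A <;> simp [h]
  calc ∫⁻ ω in A, ‖φ ω‖ₑ ∂ν = eLpNorm (A.indicator (fun _ => (1 : ℝ)) • φ) 1 ν := by
        rw [hindicator, eLpNorm_indicator_eq_eLpNorm_restrict hA, eLpNorm_one_eq_lintegral_enorm]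
    _ ≤ eLpNorm (A.indicator fun _ => (1 : ℝ)) q ν * eLpNorm φ p ν :=
        eLpNorm_smul_le_mul_eLpNorm hφ (aestronglyMeasurable_const.indicator hA)
    _ ≤ ν A ^ (1 / q.toReal) * eLpNorm φ p ν := by
        gcongr
        simpa using eLpNorm_indicator_const_le (μ := ν) (s := A) (1 : ℝ) q
    _ = eLpNorm φ p ν * ν A ^ (1 / q.toReal) := mul_comm _ _

theorem withDensity_comp_apply_le_eLpNorm_map_mul_measure_rpow {X : Type*} [MeasurableSpace X]
    {Z : Ω → X} (hZ : Measurable Z) {ρ : X → ℝ≥0∞} (hρ : Measurable ρ)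
    (hρ_fin : ∀ᵐ y ∂ν.map Z, ρ y < ∞) (hA : MeasurableSet A) :
    ν.withDensity (fun ω => ρ (Z ω)) A ≤
      eLpNorm (fun y => (ρ y).toReal) p (ν.map Z) * ν A ^ (1 / q.toReal) := by
  have hρZ_fin : ∀ᵐ ω ∂ν, ρ (Z ω) < ∞ := ae_of_ae_map hZ.aemeasurable hρ_fin
  have hρZ_enorm : ∀ᵐ ω ∂ν.restrict A, ρ (Z ω) = ‖(ρ (Z ω)).toReal‖ₑ := by
    refine ae_restrict_of_ae ?_
    filter_upwards [hρZ_fin] with ω hω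
    rw [Real.enorm_of_nonneg ENNReal.toReal_nonneg, ENNReal.ofReal_toReal hω.ne]
  rw [withDensity_apply _ hA, lintegral_congr_ae hρZ_enorm,
    eLpNorm_map_measure hρ.ennreal_toReal.aestronglyMeasurable hZ.aemeasurable]
  exact setLIntegral_enorm_le_eLpNorm_mul_measure_rpow
    (hρ.ennreal_toReal.comp hZ).aestronglyMeasurable hA

end Holder

theorem warm_start_bernstein_general
    {X : Type*} [MeasurableSpace X]
    {Ω : Type*} [MeasurableSpace Ω]
    (Prπ : Measure Ω)
    (π μ : Measure X) [IsProbabilityMeasure μ]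
    -- under `Prπ`, `Z` is a stationary Markov chain with kernel `P` and `Z₀ ∼ π`
    (Z : ℕ → Ω → X) (hZmeas : ∀ i, Measurable (Z i))
    (hZ0 : Prπ.map (Z 0) = π)
    -- pseudo spectral gap `γ > 0` and the stationary Bernstein inequality
    (γ : ℝ)
    (hBernstein : ∀ g : X → ℝ, Measurable g → (∃ M, ∀ x, |g x| ≤ M) →
      ∀ (m : ℕ) (x : ℝ), 0 < x →
        Prπ {ω | x ≤ ∑ i ∈ Finset.range m, (g (Z i ω) - ∫ y, g y ∂π)} ≤
          ENNReal.ofReal (Real.exp (-(γ * x ^ 2) /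
            (8 * ((m : ℝ) + γ⁻¹) * varPi π g + 20 * supDev π g * x))))
    -- warm start: `μ ≪ π` with `dμ/dπ ∈ L^p(π)` for some `p ∈ (1,∞]`
    (p : ℝ≥0∞) (hp : 1 < p)
    -- conclusion, for every bounded measurable `f`, every `n` and every `x > 0`,
    -- under the warm-start law `P^μ = (dμ/dπ)(Z₀) dP^π`
    (f : X → ℝ) (hfmeas : Measurable f) (hfb : ∃ M, ∀ x, |f x| ≤ M)
    (n : ℕ) (x : ℝ) (hx : 0 < x) :
    (Prπ.withDensity (fun ω => μ.rnDeriv π (Z 0 ω)))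
        {ω | x ≤ ∑ i ∈ Finset.range n, (f (Z i ω) - ∫ y, f y ∂π)} ≤
      eLpNorm (fun y => (μ.rnDeriv π y).toReal) p π *
        ENNReal.ofReal (Real.exp (-(1 / conjExp p) * (γ * x ^ 2) /
          (8 * ((n : ℝ) + γ⁻¹) * varPi π f + 20 * supDev π f * x))) := by
  have := ENNReal.HolderConjugate.conjExponent hp.le
  set A := {ω | x ≤ ∑ i ∈ Finset.range n, (f (Z i ω) - ∫ y, f y ∂π)}
  set D := 8 * ((n : ℝ) + γ⁻¹) * varPi π f + 20 * supDev π f * x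
  have hA : MeasurableSet A := measurableSet_le measurable_const
    (Finset.measurable_sum _ fun i _ => (hfmeas.comp (hZmeas i)).sub measurable_const)
  have hρ_fin : ∀ᵐ y ∂Prπ.map (Z 0), μ.rnDeriv π y < ∞ := hZ0 ▸ μ.rnDeriv_lt_top π
  have hholder := withDensity_comp_apply_le_eLpNorm_map_mul_measure_rpow
    (p := p) (q := ENNReal.conjExponent p) (hZmeas 0) (μ.measurable_rnDeriv π) hρ_fin hA
  rw [hZ0, ← conjExp_eq_toReal_conjExponent hp] at hholder
  calc _ ≤ eLpNorm (fun y => (μ.rnDeriv π y).toReal) p π * Prπ A ^ (1 / conjExp p) := hholder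
    _ ≤ eLpNorm (fun y => (μ.rnDeriv π y).toReal) p π *
          ENNReal.ofReal (Real.exp (-(γ * x ^ 2) / D)) ^ (1 / conjExp p) := by
        have hq_nonneg : 0 ≤ 1 / conjExp p := by
          rw [conjExp_eq_toReal_conjExponent hp]
          positivity
        gcongr
        exact hBernstein f hfmeas hfb n x hx
    _ = _ := by
        rw [ENNReal.ofReal_exp_rpow]
        ring_nf

/-- Warm-start Bernstein inequality: if a Markov chain with pseudo spectral gap
`γ > 0` satisfies the stationary Bernstein inequality (under the stationary path
law `Prπ`, with `Z₀ ∼ π`), and `μ ≪ π` with `dμ/dπ ∈ L^p(π)`, `p ∈ (1,∞]`, then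
under the warm-start path law `P^μ = (dμ/dπ)(Z₀) dP^π` one has, for every bounded
measurable `f` and `x > 0`,
`P^μ(Σ_{i<n}(f(Z_i)-π(f)) ≥ x) ≤ ‖dμ/dπ‖_{L^p(π)} exp(-(1/p̄)·γx²/(8(n+γ⁻¹)σ²(f)+20‖f-π(f)‖_∞x))`. -/
theorem warm_start_bernstein
    {X : Type*} [MetricSpace X] [CompleteSpace X] [TopologicalSpace.SeparableSpace X]
    [MeasurableSpace X] [BorelSpace X]
    {Ω : Type*} [MeasurableSpace Ω]
    (Prπ : Measure Ω) [IsProbabilityMeasure Prπ]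
    (P : Kernel X X) [IsMarkovKernel P]
    (π μ : Measure X) [IsProbabilityMeasure π] [IsProbabilityMeasure μ]
    -- `π` is the unique invariant distribution of `P`
    (hinv : π.bind (fun x => P x) = π)
    (huniq : ∀ π' : Measure X, IsProbabilityMeasure π' →
      π'.bind (fun x => P x) = π' → π' = π)
    -- under `Prπ`, `Z` is a stationary Markov chain with kernel `P` and `Z₀ ∼ π`
    (Z : ℕ → Ω → X) (hZmeas : ∀ i, Measurable (Z i))
    (hZ0 : Prπ.map (Z 0) = π)
    (hstep : ∀ i, Prπ.map (fun ω => (Z i ω, Z (i + 1) ω)) = (Prπ.map (Z i)).compProd P)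
    -- pseudo spectral gap `γ > 0` and the stationary Bernstein inequality
    (γ : ℝ) (hγ : 0 < γ)
    (hBernstein : ∀ g : X → ℝ, Measurable g → (∃ M, ∀ x, |g x| ≤ M) →
      ∀ (m : ℕ) (x : ℝ), 0 < x →
        Prπ {ω | x ≤ ∑ i ∈ Finset.range m, (g (Z i ω) - ∫ y, g y ∂π)} ≤
          ENNReal.ofReal (Real.exp (-(γ * x ^ 2) /
            (8 * ((m : ℝ) + γ⁻¹) * varPi π g + 20 * supDev π g * x))))
    -- warm start: `μ ≪ π` with `dμ/dπ ∈ L^p(π)` for some `p ∈ (1,∞]`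
    (p : ℝ≥0∞) (hp : 1 < p) (hac : μ ≪ π)
    (hrn : MemLp (fun x => (μ.rnDeriv π x).toReal) p π)
    -- conclusion, for every bounded measurable `f`, every `n` and every `x > 0`,
    -- under the warm-start law `P^μ = (dμ/dπ)(Z₀) dP^π`
    (f : X → ℝ) (hfmeas : Measurable f) (hfb : ∃ M, ∀ x, |f x| ≤ M)
    (n : ℕ) (x : ℝ) (hx : 0 < x) :
    (Prπ.withDensity (fun ω => μ.rnDeriv π (Z 0 ω)))
        {ω | x ≤ ∑ i ∈ Finset.range n, (f (Z i ω) - ∫ y, f y ∂π)} ≤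
      eLpNorm (fun y => (μ.rnDeriv π y).toReal) p π *
        ENNReal.ofReal (Real.exp (-(1 / conjExp p) * (γ * x ^ 2) /
          (8 * ((n : ℝ) + γ⁻¹) * varPi π f + 20 * supDev π f * x))) :=
  warm_start_bernstein_general Prπ π μ Z hZmeas hZ0 γ hBernstein p hp f hfmeas hfb n x hx
end

section
/- Let Z = (Z_i)_{i≥0} be a Markov chain on a complete separable metric space (𝒳,d) with transition kernel P, unique invariant distribution π, and pseudo spectral gap γ_ps > 0, started from μ ≪ π with dμ/dπ ∈ L^p(π) for some p ∈ (1,∞]. Then for every n ≥ 1/γ_ps, every x ∈ 𝒳 and every h > 0, P^μ( Σ_{i=0}^{n−1} 1_{B(x,h)}(Z_i) = 0 ) ≤ ‖dμ/dπ‖_{L^p(π)} exp( − n π(B(x,h)) γ_ps / (36 p̄) ). -/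
open MeasureTheory ProbabilityTheory
open scoped ENNReal

/-!
Apply the warm-start Bernstein inequality to `g = -𝟙_B`, `B = B(x,h)`, `s = π(B)`: on the event
of no visit, `∑ (g(Z_i) - π g) = n s`. Since `σ²(g) = s - s² ≤ s`, `‖g - π g‖_∞ ≤ 1` and
`n + γ⁻¹ ≤ 2n`, the Bernstein denominator is at most `36 n s`, which yields the exponent
`-n s γ / (36 p̄)`. When `s = 0` the bound is at least `‖dμ/dπ‖_p ≥ ‖dμ/dπ‖_1 = 1`; when `B` is
the whole space the event is empty; otherwise `‖g - π g‖_∞ ≥ s > 0` keeps the denominator positive.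
-/

lemma conjExp_pos {p : ℝ≥0∞} (hp : 1 < p) : 0 < conjExp p := by
  unfold conjExp
  split_ifs with hp_top
  · exact one_pos
  · have hp' : 1 < p.toReal := by simpa using (ENNReal.toReal_lt_toReal (by simp) hp_top).mpr hp
    exact div_pos (by linarith) (by linarith)

lemma one_le_eLpNorm_toReal_rnDeriv {X : Type*} [MeasurableSpace X] {μ π : Measure X}
    [IsProbabilityMeasure μ] [IsProbabilityMeasure π] (hac : μ ≪ π) {p : ℝ≥0∞} (hp : 1 ≤ p) :
    1 ≤ eLpNorm (fun x => (μ.rnDeriv π x).toReal) p π := by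
  have h_one : eLpNorm (fun x => (μ.rnDeriv π x).toReal) 1 π = 1 := by
    have h_enorm : ∀ᵐ x ∂π, ‖(μ.rnDeriv π x).toReal‖ₑ = μ.rnDeriv π x := by
      filter_upwards [μ.rnDeriv_lt_top π] with x hx
      rw [Real.enorm_eq_ofReal ENNReal.toReal_nonneg, ENNReal.ofReal_toReal hx.ne]
    rw [eLpNorm_one_eq_lintegral_enorm, lintegral_congr_ae h_enorm, Measure.lintegral_rnDeriv hac,
      measure_univ]
  calc 1 = eLpNorm (fun x => (μ.rnDeriv π x).toReal) 1 π := h_one.symm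
    _ ≤ _ := eLpNorm_le_eLpNorm_of_exponent_le hp
        (μ.measurable_rnDeriv π).ennreal_toReal.aestronglyMeasurable

section VarianceAndDeviation

variable {X : Type*} [MeasurableSpace X] (π : Measure X)

lemma varPi_neg (f : X → ℝ) : varPi π (-f) = varPi π f := by
  simp only [varPi, Pi.neg_apply, neg_sq, integral_neg]

lemma supDev_neg (f : X → ℝ) : supDev π (-f) = supDev π f := by
  simp only [supDev, Pi.neg_apply, integral_neg, neg_sub_neg, abs_sub_comm (∫ x, f x ∂π)]

lemma varPi_indicator_one {s : Set X} (hs : MeasurableSet s) :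
    varPi π (s.indicator 1) = π.real s - π.real s ^ 2 := by
  have h_sq : (fun x => s.indicator (1 : X → ℝ) x ^ 2) = s.indicator 1 := by
    ext x
    by_cases hx : x ∈ s <;> simp [hx]
  rw [varPi, h_sq, integral_indicator_one hs]

variable [IsProbabilityMeasure π] {s : Set X}

lemma abs_indicator_one_sub_measureReal_le_one (x : X) :
    |s.indicator (1 : X → ℝ) x - π.real s| ≤ 1 := by
  have h₀ : 0 ≤ π.real s := measureReal_nonneg
  have h₁ : π.real s ≤ 1 := measureReal_le_one
  by_cases hx : x ∈ s <;> simp [hx, abs_le] <;> linarith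

lemma supDev_indicator_one_le (hs : MeasurableSet s) : supDev π (s.indicator 1) ≤ 1 := by
  refine Real.iSup_le (fun x => ?_) zero_le_one
  rw [integral_indicator_one hs]
  exact abs_indicator_one_sub_measureReal_le_one π x

lemma measureReal_le_supDev_indicator_one (hs : MeasurableSet s) {x : X} (hx : x ∉ s) :
    π.real s ≤ supDev π (s.indicator 1) := by
  have h_bdd : BddAbove (Set.range fun y => |s.indicator (1 : X → ℝ) y - π.real s|) :=
    ⟨1, Set.forall_mem_range.mpr (abs_indicator_one_sub_measureReal_le_one π)⟩
  rw [supDev, integral_indicator_one hs]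
  calc π.real s = |s.indicator (1 : X → ℝ) x - π.real s| := by
        simp [hx, abs_of_nonneg measureReal_nonneg]
    _ ≤ _ := le_ciSup h_bdd x

end VarianceAndDeviation

lemma bernstein_exponent_le {c γ n s v b : ℝ} (hc : 0 < c) (hγ : 0 < γ) (hn : γ⁻¹ ≤ n)
    (hs : 0 < s) (hv₀ : 0 ≤ v) (hv : v ≤ s) (hb₀ : 0 < b) (hb : b ≤ 1) :
    -(1 / c) * (γ * (n * s) ^ 2) / (8 * (n + γ⁻¹) * v + 20 * b * (n * s)) ≤
      -(n * s * γ) / (36 * c) := by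
  have hγinv : 0 < γ⁻¹ := inv_pos.mpr hγ
  have hns : 0 < n * s := mul_pos (by linarith) hs
  have hD : 0 < 8 * (n + γ⁻¹) * v + 20 * b * (n * s) := by
    have : 0 ≤ n + γ⁻¹ := by linarith
    positivity
  set D := 8 * (n + γ⁻¹) * v + 20 * b * (n * s)
  have hD_le : D ≤ 36 * (n * s) := by
    have : 8 * (n + γ⁻¹) * v ≤ 16 * (n * s) :=
      calc 8 * (n + γ⁻¹) * v ≤ 8 * (n + γ⁻¹) * s := by gcongr; linarith
        _ ≤ 8 * (2 * n) * s := by gcongr; linarith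
        _ = 16 * (n * s) := by ring
    have : 20 * b * (n * s) ≤ 20 * (n * s) := by gcongr; linarith
    linarith
  have h_lhs : -(1 / c) * (γ * (n * s) ^ 2) * (36 * c) = -(n * s * γ) * (36 * (n * s)) := by
    field_simp
  rw [div_le_div_iff₀ hD (by positivity), h_lhs]
  exact mul_le_mul_of_nonpos_left hD_le (by nlinarith)

lemma bernstein_exponent_neg_indicator_le {X : Type*} [MeasurableSpace X] {π : Measure X}
    [IsProbabilityMeasure π] {s : Set X} (hs : MeasurableSet s) {x : X} (hx : x ∉ s)
    (hs_pos : 0 < π.real s) {c γ n : ℝ} (hc : 0 < c) (hγ : 0 < γ) (hn : γ⁻¹ ≤ n) :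
    -(1 / c) * (γ * (n * π.real s) ^ 2) / (8 * (n + γ⁻¹) * varPi π (-s.indicator 1) +
        20 * supDev π (-s.indicator 1) * (n * π.real s)) ≤
      -(n * π.real s * γ) / (36 * c) := by
  have hs_le_one : π.real s ≤ 1 := measureReal_le_one
  rw [varPi_neg, varPi_indicator_one π hs, supDev_neg]
  refine bernstein_exponent_le hc hγ hn hs_pos (by nlinarith) (by nlinarith) ?_
    (supDev_indicator_one_le π hs)
  exact hs_pos.trans_le (measureReal_le_supDev_indicator_one π hs hx)

lemma setOf_sum_indicator_eq_zero_subset {Ω X : Type*} [MeasurableSpace X] (π : Measure X)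
    {s : Set X} (hs : MeasurableSet s) (Z : ℕ → Ω → X) (n : ℕ) :
    {ω | ∑ i ∈ Finset.range n, s.indicator (1 : X → ℝ) (Z i ω) = 0} ⊆
      {ω | n * π.real s ≤
        ∑ i ∈ Finset.range n, ((-s.indicator 1) (Z i ω) - ∫ y, (-s.indicator 1) y ∂π)} := by
  intro ω hω
  rw [Set.mem_ofPred_eq] at hω
  simp only [Set.mem_ofPred_eq, Pi.neg_apply, integral_neg, integral_indicator_one hs,
    neg_sub_neg, Finset.sum_sub_distrib, Finset.sum_const, Finset.card_range, nsmul_eq_mul, hω,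
    sub_zero, le_refl]

theorem no_visit_ball_bound_general
    {X : Type*} [MetricSpace X]
    [MeasurableSpace X] [BorelSpace X]
    {Ω : Type*} [MeasurableSpace Ω]
    (Pr : Measure Ω) [IsProbabilityMeasure Pr]
    (π μ : Measure X) [IsProbabilityMeasure π] [IsProbabilityMeasure μ]
    (Z : ℕ → Ω → X)
    -- warm start: `μ ≪ π` with `dμ/dπ ∈ L^p(π)` for some `p ∈ (1,∞]`
    (p : ℝ≥0∞) (hp : 1 < p) (hac : μ ≪ π)
    -- pseudo spectral gap `γ > 0`, entering through the warm-start Bernstein inequality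
    (γ : ℝ) (hγ : 0 < γ)
    (hBernstein : ∀ g : X → ℝ, Measurable g → (∃ M, ∀ x, |g x| ≤ M) →
      ∀ (m : ℕ) (x : ℝ), 0 < x →
        Pr {ω | x ≤ ∑ i ∈ Finset.range m, (g (Z i ω) - ∫ y, g y ∂π)} ≤
          eLpNorm (fun x => (μ.rnDeriv π x).toReal) p π *
            ENNReal.ofReal (Real.exp (-(1 / conjExp p) * (γ * x ^ 2) /
              (8 * ((m : ℝ) + γ⁻¹) * varPi π g + 20 * supDev π g * x))))
    (n : ℕ) (hn : γ⁻¹ ≤ (n : ℝ)) (x : X) (h : ℝ) :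
    Pr {ω | ∑ i ∈ Finset.range n,
        (Metric.closedBall x h).indicator (fun _ => (1 : ℝ)) (Z i ω) = 0} ≤
      eLpNorm (fun y => (μ.rnDeriv π y).toReal) p π *
        ENNReal.ofReal (Real.exp (-((n : ℝ) * (π (Metric.closedBall x h)).toReal * γ) /
          (36 * conjExp p))) := by
  rw [← Pi.one_def, ← measureReal_def]
  set B := Metric.closedBall x h
  have hB : MeasurableSet B := measurableSet_closedBall
  have hn_pos : (0 : ℝ) < n := (inv_pos.mpr hγ).trans_le hn
  obtain hB_zero | hB_pos := (measureReal_nonneg (μ := π) (s := B)).eq_or_lt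
  · calc Pr _ ≤ 1 := prob_le_one
      _ ≤ eLpNorm (fun y => (μ.rnDeriv π y).toReal) p π := one_le_eLpNorm_toReal_rnDeriv hac hp.le
      _ = _ := by rw [← hB_zero]; simp
  by_cases hB_univ : ∀ y, y ∈ B
  · have h_empty : {ω | ∑ i ∈ Finset.range n, B.indicator (1 : X → ℝ) (Z i ω) = 0} = ∅ := by
      ext ω
      simp [Set.indicator_of_mem (hB_univ _), hn_pos.ne']
    rw [h_empty, measure_empty]
    exact zero_le
  obtain ⟨y, hy⟩ := not_forall.mp hB_univ
  have hg_bdd : ∀ z, |(-B.indicator (1 : X → ℝ)) z| ≤ 1 := fun z => by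
    by_cases hz : z ∈ B <;> simp [hz]
  calc Pr _ ≤ Pr {ω | n * π.real B ≤ ∑ i ∈ Finset.range n,
          ((-B.indicator 1) (Z i ω) - ∫ y, (-B.indicator 1) y ∂π)} :=
        measure_mono (setOf_sum_indicator_eq_zero_subset π hB Z n)
    _ ≤ _ := hBernstein _ (measurable_const.indicator hB).neg ⟨1, hg_bdd⟩ n _
        (mul_pos hn_pos hB_pos)
    _ ≤ _ := by
      gcongr _ * ENNReal.ofReal (Real.exp ?_)
      exact bernstein_exponent_neg_indicator_le hB hy hB_pos (conjExp_pos hp) hγ hn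

/-- For a Markov chain with pseudo spectral gap `γ > 0`, warm start `μ ≪ π` with
`dμ/dπ ∈ L^p(π)` (so that the warm-start Bernstein inequality `hBernstein` holds),
for every `n ≥ 1/γ`, every `x ∈ 𝒳` and every `h > 0`,
`P^μ(Σ_{i<n} 1_{B(x,h)}(Z_i) = 0) ≤ ‖dμ/dπ‖_{L^p(π)} exp(-n π(B(x,h)) γ / (36 p̄))`. -/
theorem no_visit_ball_bound
    {X : Type*} [MetricSpace X] [CompleteSpace X] [TopologicalSpace.SeparableSpace X]
    [MeasurableSpace X] [BorelSpace X]
    {Ω : Type*} [MeasurableSpace Ω]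
    (Pr : Measure Ω) [IsProbabilityMeasure Pr]
    (P : Kernel X X) [IsMarkovKernel P]
    (π μ : Measure X) [IsProbabilityMeasure π] [IsProbabilityMeasure μ]
    -- `π` is the unique invariant distribution of `P`
    (hinv : π.bind (fun x => P x) = π)
    (huniq : ∀ π' : Measure X, IsProbabilityMeasure π' →
      π'.bind (fun x => P x) = π' → π' = π)
    -- `Z` is a Markov chain with transition kernel `P`, started from `Z₀ ∼ μ`
    (Z : ℕ → Ω → X) (hZmeas : ∀ i, Measurable (Z i))
    (hZ0 : Pr.map (Z 0) = μ)
    (hstep : ∀ i, Pr.map (fun ω => (Z i ω, Z (i + 1) ω)) = (Pr.map (Z i)).compProd P)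
    -- warm start: `μ ≪ π` with `dμ/dπ ∈ L^p(π)` for some `p ∈ (1,∞]`
    (p : ℝ≥0∞) (hp : 1 < p) (hac : μ ≪ π)
    (hrn : MemLp (fun x => (μ.rnDeriv π x).toReal) p π)
    -- pseudo spectral gap `γ > 0`, entering through the warm-start Bernstein inequality
    (γ : ℝ) (hγ : 0 < γ)
    (hBernstein : ∀ g : X → ℝ, Measurable g → (∃ M, ∀ x, |g x| ≤ M) →
      ∀ (m : ℕ) (x : ℝ), 0 < x →
        Pr {ω | x ≤ ∑ i ∈ Finset.range m, (g (Z i ω) - ∫ y, g y ∂π)} ≤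
          eLpNorm (fun x => (μ.rnDeriv π x).toReal) p π *
            ENNReal.ofReal (Real.exp (-(1 / conjExp p) * (γ * x ^ 2) /
              (8 * ((m : ℝ) + γ⁻¹) * varPi π g + 20 * supDev π g * x))))
    (n : ℕ) (hn : γ⁻¹ ≤ (n : ℝ)) (x : X) (h : ℝ) (hh : 0 < h) :
    Pr {ω | ∑ i ∈ Finset.range n,
        (Metric.closedBall x h).indicator (fun _ => (1 : ℝ)) (Z i ω) = 0} ≤
      eLpNorm (fun y => (μ.rnDeriv π y).toReal) p π *
        ENNReal.ofReal (Real.exp (-((n : ℝ) * (π (Metric.closedBall x h)).toReal * γ) /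
          (36 * conjExp p))) :=
  no_visit_ball_bound_general Pr π μ Z p hp hac γ hγ hBernstein n hn x h
end

section
/- Let ℚ be a probability measure on ℝ^𝖽 supported on a set 𝒳_Q ⊂ ℝ^𝖽 whose covering numbers satisfy N_{𝒳_Q}(ε, d|_{𝒳_Q}) ≍ ε^{−𝖽_Q} for ε ∈ (0,1], with 𝖽_Q ≤ 𝖽. If ℚ restricted to 𝒳_Q is a doubling measure on 𝒳_Q, i.e., there is C > 0 such that ℚ(B_d(x,2r) ∩ 𝒳_Q) ≤ C ℚ(B_d(x,r) ∩ 𝒳_Q) for all x ∈ 𝒳_Q and r > 0, then ρ_h(ℚ,ℚ) ≍ h^{−𝖽_Q} for h ∈ (0,1]. -/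
open MeasureTheory
open scoped ENNReal

/-- The bandwidth-dependent similarity measure
`ρ_h(ℙ,ℚ) := ∫ 1/ℙ(B(x,h)) ℚ(dx)`, with the convention `1/0 = ∞`
(automatic in `ℝ≥0∞`). -/
noncomputable def rhoSim {X : Type*} [PseudoMetricSpace X] [MeasurableSpace X]
    (P Q : Measure X) (h : ℝ) : ℝ≥0∞ :=
  ∫⁻ x, (P (Metric.closedBall x h))⁻¹ ∂Q

/-- Covering number of `s` at scale `ε`: the smallest cardinality of a set of
closed `ε`-balls with centres in `s` covering `s` (`∞` if no finite cover exists). -/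
noncomputable def coverNum {X : Type*} [PseudoMetricSpace X] (s : Set X) (ε : ℝ) : ℝ≥0∞ :=
  sInf ((fun t : Finset X => (t.card : ℝ≥0∞)) ''
    {t : Finset X | ↑t ⊆ s ∧ s ⊆ ⋃ y ∈ t, Metric.closedBall y ε})

/-!
Covering `𝒳_Q` by `N(h/2)` closed balls of radius `h/2` gives `ρ_h(ℚ,ℚ) ≤ N(h/2)`: for `x` in
such a ball `B`, `ℚ(B(x,h)) ≥ ℚ(B)`, so `B` contributes at most `ℚ(B)/ℚ(B) ≤ 1`.
Conversely, a maximal `h`-separated subset of `𝒳_Q` has at least `N(h)` points and disjoint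
`h/2`-balls around them; doubling twice gives `ℚ(B(x,h)) ≤ C² ℚ(B)` on each such ball `B`,
which therefore contributes at least `C⁻²` (balls centred in the bounded support have positive
mass). Hence `N(h)/C² ≤ ρ_h(ℚ,ℚ) ≤ N(h/2)`, and both sides are `≍ h^{-𝖽_Q}`.
-/

open Metric Set

section CoveringNumbers

variable {X : Type*} [PseudoMetricSpace X] {s : Set X}

lemma coverNum_le_card {ε : ℝ} {t : Finset X} (hts : ↑t ⊆ s)
    (hst : s ⊆ ⋃ y ∈ t, closedBall y ε) : coverNum s ε ≤ t.card :=
  sInf_le ⟨t, ⟨hts, hst⟩, rfl⟩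

lemma isBounded_of_coverNum_ne_top {ε : ℝ} (hfin : coverNum s ε ≠ ⊤) :
    Bornology.IsBounded s := by
  obtain ⟨_, ⟨t, ⟨_, hst⟩, rfl⟩, -⟩ := sInf_lt_iff.mp hfin.lt_top
  exact ((Bornology.isBounded_biUnion_finset t).mpr fun y _ => isBounded_closedBall).subset hst

lemma coverNum_eq_coveringNumber {ε : ℝ} (hε : 0 ≤ ε) :
    coverNum s ε = coveringNumber ε.toNNReal s := by
  have hcover (N : Set X) : IsCover ε.toNNReal s N ↔ s ⊆ ⋃ y ∈ N, closedBall y ε := by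
    rw [isCover_iff_subset_iUnion_closedBall, Real.coe_toNNReal _ hε]
  apply le_antisymm
  · by_cases htop : coveringNumber ε.toNNReal s = ⊤
    · simp [htop]
    obtain ⟨N, hNs, hNfin, hN, hcard⟩ := exists_set_encard_eq_coveringNumber htop
    calc coverNum s ε ≤ hNfin.toFinset.card :=
          coverNum_le_card (by simpa using hNs) (by simpa using (hcover N).1 hN)
      _ = _ := by rw [← hcard, hNfin.encard_eq_coe_toFinset_card]; rfl
  · refine le_sInf ?_
    rintro _ ⟨t, ⟨hts, hst⟩, rfl⟩
    have := ((hcover t).2 (by simpa using hst)).coveringNumber_le_encard hts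
    rw [encard_coe_eq_coe_finsetCard] at this
    simpa only [ENat.toENNReal_coe] using ENat.toENNReal_le.mpr this

lemma exists_separated_finset_coverNum_le {h : ℝ} (hh : 0 < h)
    (hfin : coverNum s (h / 2) ≠ ⊤) :
    ∃ t : Finset X, ↑t ⊆ s ∧ (t : Set X).Pairwise (fun a b => h < dist a b) ∧
      coverNum s h ≤ t.card := by
  have hpack : packingNumber h.toNNReal s ≠ ⊤ := by
    have h2 : h.toNNReal = 2 * (h / 2).toNNReal := by
      rw [← Real.toNNReal_ofNat, ← Real.toNNReal_mul zero_le_two]; ring_nf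
    refine ne_top_of_le_ne_top ?_ (h2 ▸ packingNumber_two_mul_le_externalCoveringNumber _ s)
    refine ne_top_of_le_ne_top ?_ (externalCoveringNumber_le_coveringNumber _ s)
    rwa [coverNum_eq_coveringNumber (by positivity), ne_eq, ENat.toENNReal_eq_top] at hfin
  have hC := encard_maximalSeparatedSet hpack
  have hfinite : (maximalSeparatedSet h.toNNReal s).Finite :=
    Set.encard_ne_top_iff.mp (hC ▸ hpack)
  refine ⟨hfinite.toFinset, by simpa using maximalSeparatedSet_subset, ?_, ?_⟩
  · intro a ha b hb hab
    have := isSeparated_maximalSeparatedSet (by simpa using ha) (by simpa using hb) hab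
    change _ < edist a b at this
    rwa [edist_dist, ← ENNReal.ofReal_coe_nnreal,
      ENNReal.ofReal_lt_ofReal_iff_of_nonneg (by positivity), Real.coe_toNNReal _ hh.le] at this
  · rw [coverNum_eq_coveringNumber hh.le, ← ENat.toENNReal_coe,
      ← hfinite.encard_eq_coe_toFinset_card, hC]
    exact ENat.toENNReal_le.mpr (coveringNumber_le_packingNumber _ s)

end CoveringNumbers

section Doubling

variable {X : Type*} [PseudoMetricSpace X] [MeasurableSpace X] {μ : Measure X} {s : Set X}
  {C : ℝ≥0∞} {x : X} {r h : ℝ}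

def IsDoublingOn (μ : Measure X) (s : Set X) (C : ℝ≥0∞) : Prop :=
  ∀ x ∈ s, ∀ r : ℝ, 0 < r → μ (closedBall x (2 * r)) ≤ C * μ (closedBall x r)

lemma IsDoublingOn.measure_closedBall_two_pow_mul_le (hd : IsDoublingOn μ s C) (hx : x ∈ s)
    (hr : 0 < r) (k : ℕ) : μ (closedBall x (2 ^ k * r)) ≤ C ^ k * μ (closedBall x r) := by
  induction k with
  | zero => simp
  | succ k ih =>
    calc μ (closedBall x (2 ^ (k + 1) * r)) = μ (closedBall x (2 * (2 ^ k * r))) := by ring_nf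
      _ ≤ C * μ (closedBall x (2 ^ k * r)) := hd x hx _ (by positivity)
      _ ≤ C * (C ^ k * μ (closedBall x r)) := by gcongr
      _ = C ^ (k + 1) * μ (closedBall x r) := by ring

lemma IsDoublingOn.measure_closedBall_pos (hd : IsDoublingOn μ s C) (hs : Bornology.IsBounded s)
    (hμs : μ sᶜ = 0) (hμ : μ ≠ 0) (hx : x ∈ s) (hr : 0 < r) :
    0 < μ (closedBall x r) := by
  obtain ⟨R, hR⟩ := hs.subset_closedBall x
  obtain ⟨k, hk⟩ := pow_unbounded_of_one_lt (R / r) one_lt_two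
  have hRk : R ≤ 2 ^ k * r := by rw [div_lt_iff₀ hr] at hk; exact hk.le
  refine pos_iff_ne_zero.mpr fun h0 => hμ (Measure.measure_univ_eq_zero.mp (le_zero_iff.mp ?_))
  calc μ univ = μ s := by rw [← measure_inter_conull hμs, univ_inter]
    _ ≤ μ (closedBall x (2 ^ k * r)) :=
        measure_mono (hR.trans (closedBall_subset_closedBall hRk))
    _ ≤ C ^ k * μ (closedBall x r) := hd.measure_closedBall_two_pow_mul_le hx hr k
    _ = 0 := by rw [h0, mul_zero]

variable [OpensMeasurableSpace X]

lemma setLIntegral_inv_measure_closedBall_le_one (μ : Measure X) (y : X) (h : ℝ) :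
    ∫⁻ x in closedBall y (h / 2), (μ (closedBall x h))⁻¹ ∂μ ≤ 1 := by
  set B := closedBall y (h / 2)
  have hB : ∀ x ∈ B, B ⊆ closedBall x h := fun x hx =>
    closedBall_subset_closedBall' (by rw [dist_comm]; linarith [mem_closedBall.mp hx])
  calc ∫⁻ x in B, (μ (closedBall x h))⁻¹ ∂μ ≤ ∫⁻ _ in B, (μ B)⁻¹ ∂μ :=
        setLIntegral_mono' measurableSet_closedBall fun x hx =>
          ENNReal.inv_le_inv' (measure_mono (hB x hx))
    _ = (μ B)⁻¹ * μ B := setLIntegral_const _ _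
    _ ≤ 1 := ENNReal.inv_mul_le_one _

lemma IsDoublingOn.inv_sq_le_setLIntegral [IsFiniteMeasure μ] (hd : IsDoublingOn μ s C)
    {y : X} (hy : y ∈ s) (hh : 0 < h) (hpos : μ (closedBall y (h / 2)) ≠ 0) :
    (C ^ 2)⁻¹ ≤ ∫⁻ x in closedBall y (h / 2), (μ (closedBall x h))⁻¹ ∂μ := by
  set B := closedBall y (h / 2)
  have hB : ∀ x ∈ B, μ (closedBall x h) ≤ C ^ 2 * μ B := fun x hx => calc
    μ (closedBall x h) ≤ μ (closedBall y (2 ^ 2 * (h / 2))) :=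
        measure_mono (closedBall_subset_closedBall' (by linarith [mem_closedBall.mp hx]))
    _ ≤ C ^ 2 * μ B := hd.measure_closedBall_two_pow_mul_le hy (by positivity) 2
  calc (C ^ 2)⁻¹ = (C ^ 2 * μ B)⁻¹ * μ B := by
        rw [ENNReal.mul_inv (Or.inr (measure_ne_top _ _)) (Or.inr hpos), mul_assoc,
          ENNReal.inv_mul_cancel hpos (measure_ne_top _ _), mul_one]
    _ = ∫⁻ _ in B, (C ^ 2 * μ B)⁻¹ ∂μ := (setLIntegral_const _ _).symm
    _ ≤ ∫⁻ x in B, (μ (closedBall x h))⁻¹ ∂μ :=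
        setLIntegral_mono' measurableSet_closedBall fun x hx => ENNReal.inv_le_inv' (hB x hx)

end Doubling

section Similarity

variable {X : Type*} [PseudoMetricSpace X] [MeasurableSpace X] [OpensMeasurableSpace X]
  {μ : Measure X} {s : Set X} {C : ℝ≥0∞} {h : ℝ}

lemma rhoSim_self_le_card (hμs : μ sᶜ = 0) {t : Finset X}
    (hst : s ⊆ ⋃ y ∈ t, closedBall y (h / 2)) : rhoSim μ μ h ≤ t.card := by
  set ν := μ.withDensity fun x => (μ (closedBall x h))⁻¹
  have hνs : ν sᶜ = 0 := withDensity_absolutelyContinuous _ _ hμs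
  calc rhoSim μ μ h = ν s := by
        rw [← univ_inter s, measure_inter_conull hνs, withDensity_apply _ MeasurableSet.univ,
          Measure.restrict_univ]
        rfl
    _ ≤ ∑ y ∈ t, ν (closedBall y (h / 2)) :=
        (measure_mono hst).trans (measure_biUnion_finset_le _ _)
    _ ≤ ∑ _y ∈ t, 1 := Finset.sum_le_sum fun y _ => by
        rw [withDensity_apply _ measurableSet_closedBall]
        exact setLIntegral_inv_measure_closedBall_le_one μ y h
    _ = t.card := by simp

lemma rhoSim_self_le_coverNum (hμs : μ sᶜ = 0) : rhoSim μ μ h ≤ coverNum s (h / 2) :=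
  le_sInf fun _ ⟨_, ⟨_, hst⟩, hcard⟩ => hcard ▸ rhoSim_self_le_card hμs hst

lemma IsDoublingOn.card_mul_le_rhoSim_self [IsFiniteMeasure μ] (hd : IsDoublingOn μ s C)
    (hh : 0 < h) (hpos : ∀ y ∈ s, μ (closedBall y (h / 2)) ≠ 0) {t : Finset X}
    (hts : ↑t ⊆ s) (hsep : (t : Set X).Pairwise fun a b => h < dist a b) :
    t.card * (C ^ 2)⁻¹ ≤ rhoSim μ μ h := by
  have hdisj : (t : Set X).PairwiseDisjoint fun y => closedBall y (h / 2) :=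
    hsep.mono' fun a b hab => closedBall_disjoint_closedBall (by linarith)
  calc t.card * (C ^ 2)⁻¹ = ∑ _y ∈ t, (C ^ 2)⁻¹ := by simp
    _ ≤ ∑ y ∈ t, ∫⁻ x in closedBall y (h / 2), (μ (closedBall x h))⁻¹ ∂μ :=
        Finset.sum_le_sum fun y hy => hd.inv_sq_le_setLIntegral (hts hy) hh (hpos y (hts hy))
    _ = ∫⁻ x in ⋃ y ∈ t, closedBall y (h / 2), (μ (closedBall x h))⁻¹ ∂μ :=
        (lintegral_biUnion_finset hdisj (fun _ _ => measurableSet_closedBall) _).symm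
    _ ≤ rhoSim μ μ h := setLIntegral_le_lintegral _ _

lemma IsDoublingOn.coverNum_mul_le_rhoSim_self [IsFiniteMeasure μ] (hd : IsDoublingOn μ s C)
    (hh : 0 < h) (hpos : ∀ y ∈ s, μ (closedBall y (h / 2)) ≠ 0)
    (hfin : coverNum s (h / 2) ≠ ⊤) : coverNum s h * (C ^ 2)⁻¹ ≤ rhoSim μ μ h := by
  obtain ⟨t, hts, hsep, hcard⟩ := exists_separated_finset_coverNum_le hh hfin
  exact (mul_le_mul_left hcard _).trans (hd.card_mul_le_rhoSim_self hh hpos hts hsep)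

end Similarity

theorem rho_self_asymp_of_doubling_general
    {E : Type*} [NormedAddCommGroup E]
    [MeasurableSpace E] [BorelSpace E]
    (dQ : ℕ)
    (Q : Measure E) [IsProbabilityMeasure Q]
    (XQ : Set E)
    -- `ℚ` is supported on `𝒳_Q`
    (hsupp : Q XQᶜ = 0)
    -- `N_{𝒳_Q}(ε) ≍ ε^{-𝖽_Q}` for `ε ∈ (0,1]`
    (hcov : ∃ c₁ c₂ : ℝ, 0 < c₁ ∧ 0 < c₂ ∧ ∀ ε : ℝ, 0 < ε → ε ≤ 1 →
      ENNReal.ofReal (c₁ * ε ^ (-(dQ : ℝ))) ≤ coverNum XQ ε ∧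
        coverNum XQ ε ≤ ENNReal.ofReal (c₂ * ε ^ (-(dQ : ℝ))))
    -- `ℚ|_{𝒳_Q}` is a doubling measure on `𝒳_Q`
    (hdouble : ∃ C : ℝ, 0 < C ∧ ∀ x ∈ XQ, ∀ r : ℝ, 0 < r →
      Q (Metric.closedBall x (2 * r) ∩ XQ) ≤ ENNReal.ofReal C * Q (Metric.closedBall x r ∩ XQ)) :
    ∃ c₁ c₂ : ℝ≥0∞, 0 < c₁ ∧ c₂ < ⊤ ∧ ∀ h : ℝ, 0 < h → h ≤ 1 →
      c₁ * ENNReal.ofReal (h ^ (-(dQ : ℝ))) ≤ rhoSim Q Q h ∧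
        rhoSim Q Q h ≤ c₂ * ENNReal.ofReal (h ^ (-(dQ : ℝ))) := by
  obtain ⟨c₁, c₂, hc₁, hc₂, hcovs⟩ := hcov
  obtain ⟨C, -, hC⟩ := hdouble
  have hd : IsDoublingOn Q XQ (ENNReal.ofReal C) := fun x hx r hr => by
    simpa only [measure_inter_conull hsupp] using hC x hx r hr
  have hfin : ∀ ε, 0 < ε → ε ≤ 1 → coverNum XQ ε ≠ ⊤ := fun ε h0 h1 =>
    ne_top_of_le_ne_top ENNReal.ofReal_ne_top (hcovs ε h0 h1).2
  have hpos : ∀ y ∈ XQ, ∀ r : ℝ, 0 < r → Q (closedBall y r) ≠ 0 := fun y hy r hr =>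
    (hd.measure_closedBall_pos (isBounded_of_coverNum_ne_top (hfin 1 one_pos le_rfl)) hsupp
      (IsProbabilityMeasure.ne_zero Q) hy hr).ne'
  refine ⟨ENNReal.ofReal c₁ * (ENNReal.ofReal C ^ 2)⁻¹, ENNReal.ofReal (c₂ * 2 ^ (dQ : ℝ)),
    ENNReal.mul_pos (ENNReal.ofReal_pos.mpr hc₁).ne'
      (ENNReal.inv_ne_zero.mpr (ENNReal.pow_ne_top ENNReal.ofReal_ne_top)),
    ENNReal.ofReal_lt_top, fun h h0 h1 => ⟨?_, ?_⟩⟩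
  · calc _ = ENNReal.ofReal (c₁ * h ^ (-(dQ : ℝ))) * (ENNReal.ofReal C ^ 2)⁻¹ := by
          rw [ENNReal.ofReal_mul hc₁.le]; ring
      _ ≤ coverNum XQ h * (ENNReal.ofReal C ^ 2)⁻¹ := by gcongr; exact (hcovs h h0 h1).1
      _ ≤ rhoSim Q Q h := hd.coverNum_mul_le_rhoSim_self h0
          (fun y hy => hpos y hy _ (by positivity)) (hfin _ (by positivity) (by linarith))
  · calc rhoSim Q Q h ≤ coverNum XQ (h / 2) := rhoSim_self_le_coverNum hsupp
      _ ≤ ENNReal.ofReal (c₂ * (h / 2) ^ (-(dQ : ℝ))) :=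
          (hcovs _ (by positivity) (by linarith)).2
      _ = _ := by
        rw [← ENNReal.ofReal_mul (by positivity), Real.div_rpow h0.le zero_le_two,
          Real.rpow_neg zero_le_two, div_inv_eq_mul, mul_comm _ (2 ^ _), mul_assoc]

/-- If `ℚ` is a probability measure on a `𝖽`-dimensional normed space, supported
on a set `𝒳_Q` whose covering numbers satisfy `N(ε) ≍ ε^{-𝖽_Q}` on `(0,1]`
(`𝖽_Q ≤ 𝖽`), and `ℚ` restricted to `𝒳_Q` is doubling on `𝒳_Q`, then
`ρ_h(ℚ,ℚ) ≍ h^{-𝖽_Q}` for `h ∈ (0,1]`. -/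
theorem rho_self_asymp_of_doubling
    {E : Type*} [NormedAddCommGroup E] [NormedSpace ℝ E] [FiniteDimensional ℝ E]
    [MeasurableSpace E] [BorelSpace E]
    (dd dQ : ℕ) (hdim : Module.finrank ℝ E = dd) (hdQ : dQ ≤ dd)
    (Q : Measure E) [IsProbabilityMeasure Q]
    (XQ : Set E) (hXQmeas : MeasurableSet XQ)
    -- `ℚ` is supported on `𝒳_Q`
    (hsupp : Q XQᶜ = 0)
    -- `N_{𝒳_Q}(ε) ≍ ε^{-𝖽_Q}` for `ε ∈ (0,1]`
    (hcov : ∃ c₁ c₂ : ℝ, 0 < c₁ ∧ 0 < c₂ ∧ ∀ ε : ℝ, 0 < ε → ε ≤ 1 →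
      ENNReal.ofReal (c₁ * ε ^ (-(dQ : ℝ))) ≤ coverNum XQ ε ∧
        coverNum XQ ε ≤ ENNReal.ofReal (c₂ * ε ^ (-(dQ : ℝ))))
    -- `ℚ|_{𝒳_Q}` is a doubling measure on `𝒳_Q`
    (hdouble : ∃ C : ℝ, 0 < C ∧ ∀ x ∈ XQ, ∀ r : ℝ, 0 < r →
      Q (Metric.closedBall x (2 * r) ∩ XQ) ≤ ENNReal.ofReal C * Q (Metric.closedBall x r ∩ XQ)) :
    ∃ c₁ c₂ : ℝ≥0∞, 0 < c₁ ∧ c₂ < ⊤ ∧ ∀ h : ℝ, 0 < h → h ≤ 1 →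
      c₁ * ENNReal.ofReal (h ^ (-(dQ : ℝ))) ≤ rhoSim Q Q h ∧
        rhoSim Q Q h ≤ c₂ * ENNReal.ofReal (h ^ (-(dQ : ℝ))) :=
  rho_self_asymp_of_doubling_general dQ Q XQ hsupp hcov hdouble
end

section
/- Let 𝒳 be compactly contained in ℝ^𝖽 with diameter D > 0 and metric d induced by a vector norm. Suppose the Markov kernel pair (P,Q) has kernel transfer exponent γ ≥ 0 with constant C > 0 and radius D, i.e., (P,Q) ∈ 𝒯(γ,C,D), with associated minorizing measure ν^P satisfying P^{m_P}(x,·) ≥ ε_P ν^P(·) for all x ∈ 𝒳 (ε_P ∈ (0,1), m_P ∈ ℕ), witnessing set 𝒳_Q compactly contained in 𝒳 with N_{𝒳_Q}(ε, d|_{𝒳_Q}) ≤ (1 + k_Q D/ε)^{𝖽_Q} for some 𝖽_Q ≤ 𝖽 and k_Q ≥ 1, and let π^P, π^Q be invariant distributions of P and Q. Then: if γ + 𝖽_Q ≥ 𝖽, (π^P, π^Q) ∈ 𝒟(γ+𝖽_Q, (2k_Q+1)^{𝖽_Q}/(C ε_P)); if γ + 𝖽_Q < 𝖽, (π^P, π^Q)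 ∈ 𝒟'(γ+𝖽_Q, 𝖽_Q, (2k_Q+1)^{𝖽_Q}/((C ε_P) ∧ 1)). In particular, (π^P, π^Q) ∈ 𝒟(γ+𝖽, 9^𝖽/(C ε_P)) always holds. -/
open MeasureTheory ProbabilityTheory
open scoped ENNReal

/-- `m`-step iterate `P^m` of a Markov kernel. -/
noncomputable def kernelIter {X : Type*} [MeasurableSpace X] (P : Kernel X X) : ℕ → Kernel X X
  | 0 => Kernel.id
  | n + 1 => Kernel.comp (kernelIter P n) P

/-- Support of a measure on a metric space: `y ∈ supp μ` iff every closed ball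
around `y` has positive measure. -/
def msupport {X : Type*} [PseudoMetricSpace X] [MeasurableSpace X] (μ : Measure X) : Set X :=
  {y | ∀ r : ℝ, 0 < r → 0 < μ (Metric.closedBall y r)}

/-- Membership `(ℙ,ℚ) ∈ 𝒟(α,C)`-type condition on a space of diameter `D`:
`sup_{0<h≤D} (h/D)^α ρ_h(ℙ,ℚ) ≤ C`. -/
def alphaFamilyCond {X : Type*} [PseudoMetricSpace X] [MeasurableSpace X]
    (D α C : ℝ) (P Q : Measure X) : Prop :=
  ∀ h : ℝ, 0 < h → h ≤ D → ENNReal.ofReal ((h / D) ^ α) * rhoSim P Q h ≤ ENNReal.ofReal C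

/-!
Invariance of `π^Q` under `Q^{m_Q}` makes it live on `𝒳_Q`; integrating the transfer inequality
against `π^Q` and the minorization against `π^P` gives
`π^P(B(x,h)) ≥ C ε_P (h/D)^γ π^Q(B(x,h))` on `𝒳_Q`, hence
`ρ_h(π^P,π^Q) ≤ (C ε_P)⁻¹ (h/D)^{-γ} ρ_h(π^Q,π^Q)`. In turn `ρ_h(π^Q,π^Q)` is at most the
covering number of `𝒳_Q` at scale `h/2`, since on `B(y,h/2)` the integrand is at most
`1/π^Q(B(y,h/2))`. That covering number is bounded either by the assumed `(1 + k_Q D/ε)^{𝖽_Q}`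
or, by comparing volumes of disjoint balls around a maximal separated set, by `(1 + 2D/ε)^𝖽`.
-/

open Metric Module
open scoped NNReal

section Invariance

variable {Y : Type*} [MeasurableSpace Y]

lemma bind_kernelIter_eq_self {P : Kernel Y Y} {μ : Measure Y}
    (hinv : μ.bind (fun x => P x) = μ) : ∀ m, μ.bind (fun x => kernelIter P m x) = μ
  | 0 => by simpa only [kernelIter, Kernel.id_apply] using Measure.bind_dirac
  | m + 1 => by
    have hcomp : (fun x => kernelIter P (m + 1) x) =
        fun x => (P x).bind (fun y => kernelIter P m y) :=
      funext fun x => Kernel.comp_apply _ _ x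
    rw [hcomp, ← Measure.bind_bind P.measurable.aemeasurable
      (kernelIter P m).measurable.aemeasurable, hinv, bind_kernelIter_eq_self hinv m]

lemma lintegral_kernel_eq_of_bind_eq_self {κ : Kernel Y Y} {π : Measure Y}
    (hinv : π.bind (fun x => κ x) = π) {A : Set Y} (hA : MeasurableSet A) :
    ∫⁻ x, κ x A ∂π = π A := by
  conv_rhs => rw [← hinv]
  exact (Measure.bind_apply hA κ.measurable.aemeasurable).symm

lemma smul_le_of_bind_eq_self {κ : Kernel Y Y} {π ν : Measure Y} [IsProbabilityMeasure π]
    (hinv : π.bind (fun x => κ x) = π) {c : ℝ≥0∞}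
    (hminor : ∀ x A, MeasurableSet A → c * ν A ≤ κ x A) : c • ν ≤ π := by
  refine Measure.le_iff.2 fun A hA => ?_
  calc (c • ν) A = ∫⁻ _, c * ν A ∂π := by simp
    _ ≤ ∫⁻ x, κ x A ∂π := lintegral_mono fun x => hminor x A hA
    _ = π A := lintegral_kernel_eq_of_bind_eq_self hinv hA

lemma mul_le_of_bind_eq_self {κ : Kernel Y Y} {π ν : Measure Y} [IsProbabilityMeasure π]
    (hinv : π.bind (fun x => κ x) = π) {c : ℝ≥0∞} {B : Set Y} (hB : MeasurableSet B)
    (h : ∀ᵐ y ∂π, c * κ y B ≤ ν B) : c * π B ≤ ν B :=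
  calc c * π B = ∫⁻ y, c * κ y B ∂π := by
        rw [lintegral_const_mul c (κ.measurable_coe hB),
          lintegral_kernel_eq_of_bind_eq_self hinv hB]
    _ ≤ ∫⁻ _, ν B ∂π := lintegral_mono_ae h
    _ = ν B := by simp

end Invariance

section Support

variable {Y : Type*} [PseudoMetricSpace Y] [MeasurableSpace Y]

lemma msupport_eq_support (μ : Measure Y) : msupport μ = μ.support :=
  Set.ext fun _ => nhds_basis_closedBall.mem_measureSupport.symm

lemma ae_mem_of_msupport_subset [HereditarilyLindelofSpace Y] {μ : Measure Y} {S : Set Y}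
    (h : msupport μ ⊆ S) : ∀ᵐ x ∂μ, x ∈ S :=
  Filter.mem_of_superset Measure.support_mem_ae (msupport_eq_support μ ▸ h)

lemma ae_mem_of_bind_eq_self [HereditarilyLindelofSpace Y] {κ : Kernel Y Y} {π : Measure Y}
    (hinv : π.bind (fun x => κ x) = π) {S : Set Y} (hS : MeasurableSet S)
    (hsupp : ∀ x, msupport (κ x) ⊆ S) : ∀ᵐ x ∂π, x ∈ S := by
  rw [ae_iff, ← Set.compl_def, ← lintegral_kernel_eq_of_bind_eq_self hinv hS.compl]
  have hnull : ∀ x, κ x Sᶜ = 0 := fun x => ae_iff.1 (ae_mem_of_msupport_subset (hsupp x))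
  simp only [hnull, lintegral_zero]

end Support

section Similarity

variable {Y : Type*} [PseudoMetricSpace Y] [MeasurableSpace Y]

lemma rhoSim_le_inv_mul_rhoSim {P R Q : Measure Y} {h : ℝ} {c : ℝ≥0∞} (hc0 : c ≠ 0)
    (hctop : c ≠ ⊤) (hcomp : ∀ᵐ x ∂Q, c * R (closedBall x h) ≤ P (closedBall x h)) :
    rhoSim P Q h ≤ c⁻¹ * rhoSim R Q h := by
  rw [rhoSim, rhoSim, ← lintegral_const_mul' _ _ (ENNReal.inv_ne_top.2 hc0)]
  refine lintegral_mono_ae (hcomp.mono fun x hx => ?_)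
  rw [← ENNReal.mul_inv (.inl hc0) (.inl hctop)]
  exact ENNReal.inv_le_inv' hx

variable [OpensMeasurableSpace Y]

lemma setLIntegral_closedBall_inv_measure_closedBall_le_one (μ : Measure Y) (y : Y) (h : ℝ) : ∫⁻ x in closedBall y (h / 2), (μ (closedBall x h))⁻¹ ∂μ ≤ 1 := by
  have hsub : ∀ x ∈ closedBall y (h / 2), closedBall y (h / 2) ⊆ closedBall x h := by
    intro x hx
    refine closedBall_subset_closedBall' ?_
    rw [dist_comm]
    linarith [mem_closedBall.1 hx]
  calc ∫⁻ x in closedBall y (h / 2), (μ (closedBall x h))⁻¹ ∂μ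
      ≤ ∫⁻ _ in closedBall y (h / 2), (μ (closedBall y (h / 2)))⁻¹ ∂μ :=
        setLIntegral_mono' measurableSet_closedBall fun x hx =>
          ENNReal.inv_le_inv' (measure_mono (hsub x hx))
    _ = (μ (closedBall y (h / 2)))⁻¹ * μ (closedBall y (h / 2)) := setLIntegral_const _ _
    _ ≤ 1 := ENNReal.inv_mul_le_one _

lemma rhoSim_self_le_coverNum_s5 (μ : Measure Y) {S : Set Y}
    (hS : ∀ᵐ x ∂μ, x ∈ S) (h : ℝ) : rhoSim μ μ h ≤ coverNum S (h / 2) := by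
  refine le_sInf ?_
  rintro _ ⟨t, ⟨-, hcover⟩, rfl⟩
  calc rhoSim μ μ h = ∫⁻ x in S, (μ (closedBall x h))⁻¹ ∂μ := by
        rw [rhoSim, Measure.restrict_eq_self_of_ae_mem hS]
    _ ≤ ∫⁻ x in ⋃ y ∈ t, closedBall y (h / 2), (μ (closedBall x h))⁻¹ ∂μ :=
        lintegral_mono_set hcover
    _ ≤ ∑' y : (t : Set Y), ∫⁻ x in closedBall y (h / 2), (μ (closedBall x h))⁻¹ ∂μ := by
        rw [← Finset.set_biUnion_coe, Set.biUnion_eq_iUnion]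
        exact lintegral_iUnion_le _ _
    _ ≤ ∑' _ : (t : Set Y), 1 := ENNReal.tsum_le_tsum fun y =>
        setLIntegral_closedBall_inv_measure_closedBall_le_one μ y h
    _ = t.card := by simp

lemma rhoSim_le_of_transfer {κ : Kernel Y Y} {πP πQ ν : Measure Y} [IsProbabilityMeasure πQ]
    (hinv : πQ.bind (fun x => κ x) = πQ) {S : Set Y} (hS : ∀ᵐ x ∂πQ, x ∈ S) {c a : ℝ≥0∞}
    (hc0 : c * a ≠ 0) (hctop : c * a ≠ ⊤) (hν : c • ν ≤ πP) {h : ℝ}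
    (htransfer : ∀ x ∈ S, ∀ y ∈ S, a * κ y (closedBall x h) ≤ ν (closedBall x h)) :
    rhoSim πP πQ h ≤ (c * a)⁻¹ * rhoSim πQ πQ h := by
  refine rhoSim_le_inv_mul_rhoSim hc0 hctop (hS.mono fun x hx => ?_)
  calc c * a * πQ (closedBall x h) = c * (a * πQ (closedBall x h)) := mul_assoc _ _ _
    _ ≤ c * ν (closedBall x h) := by
        gcongr
        exact mul_le_of_bind_eq_self hinv measurableSet_closedBall
          (hS.mono fun y hy => htransfer x hx y hy)
    _ ≤ πP (closedBall x h) := hν _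

end Similarity

namespace alphaFamilyCond

variable {Y : Type*} [PseudoMetricSpace Y] [MeasurableSpace Y] {D α K K' : ℝ} {P Q : Measure Y}

lemma mono (hK : K ≤ K') (h : alphaFamilyCond D α K P Q) : alphaFamilyCond D α K' P Q :=
  fun r hr hrD => (h r hr hrD).trans (ENNReal.ofReal_le_ofReal hK)

end alphaFamilyCond

section AlphaFamily

variable {Y : Type*} [PseudoMetricSpace Y] [MeasurableSpace Y]

lemma alphaFamilyCond_self_of_coverNum_le [OpensMeasurableSpace Y] {μ : Measure Y} {S : Set Y} (hS : ∀ᵐ x ∂μ, x ∈ S) {D k p : ℝ} (hk : 0 ≤ k) (hp : 0 ≤ p)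
    (hcov : ∀ ε, 0 < ε → coverNum S ε ≤ ENNReal.ofReal ((1 + k * D / ε) ^ p)) :
    alphaFamilyCond D p ((2 * k + 1) ^ p) μ μ := by
  intro h h0 hD
  have hD0 : 0 < D := h0.trans_le hD
  have hhD : 0 < h / D := div_pos h0 hD0
  have hhD1 : h / D ≤ 1 := div_le_one_of_le₀ hD hD0.le
  calc ENNReal.ofReal ((h / D) ^ p) * rhoSim μ μ h
      ≤ ENNReal.ofReal ((h / D) ^ p) * ENNReal.ofReal ((1 + k * D / (h / 2)) ^ p) := by
        gcongr
        exact (rhoSim_self_le_coverNum_s5 μ hS h).trans (hcov _ (half_pos h0))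
    _ = ENNReal.ofReal ((h / D + 2 * k) ^ p) := by
        rw [← ENNReal.ofReal_mul (by positivity), ← Real.mul_rpow hhD.le (by positivity)]
        congr 2
        field_simp
    _ ≤ ENNReal.ofReal ((2 * k + 1) ^ p) :=
        ENNReal.ofReal_le_ofReal (Real.rpow_le_rpow (by positivity) (by linarith) hp)

lemma alphaFamilyCond_add_of_rhoSim_le {D γ κ p K : ℝ} {P Q R : Measure Y} (hκ : 0 < κ)
    (hρ : ∀ h, 0 < h → h ≤ D →
      rhoSim P Q h ≤ (ENNReal.ofReal (κ * (h / D) ^ γ))⁻¹ * rhoSim R Q h)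
    (hR : alphaFamilyCond D p K R Q) : alphaFamilyCond D (γ + p) (K / κ) P Q := by
  intro h h0 hD
  have hhD : 0 < h / D := div_pos h0 (h0.trans_le hD)
  have hγ : 0 < (h / D) ^ γ := Real.rpow_pos_of_pos hhD γ
  calc ENNReal.ofReal ((h / D) ^ (γ + p)) * rhoSim P Q h
      ≤ ENNReal.ofReal ((h / D) ^ (γ + p)) *
          (ENNReal.ofReal ((κ * (h / D) ^ γ)⁻¹) * rhoSim R Q h) := by
        rw [ENNReal.ofReal_inv_of_pos (by positivity)]
        gcongr
        exact hρ h h0 hD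
    _ = ENNReal.ofReal κ⁻¹ * (ENNReal.ofReal ((h / D) ^ p) * rhoSim R Q h) := by
        rw [← mul_assoc, ← ENNReal.ofReal_mul (by positivity), Real.rpow_add hhD,
          ← mul_assoc, ← ENNReal.ofReal_mul (by positivity)]
        congr 2
        field_simp
    _ ≤ ENNReal.ofReal κ⁻¹ * ENNReal.ofReal K := by
        gcongr
        exact hR h h0 hD
    _ ≤ ENNReal.ofReal (K / κ) := by
        rw [← ENNReal.ofReal_mul (by positivity), mul_comm, div_eq_mul_inv]

end AlphaFamily

section Volume

variable {E : Type*} [NormedAddCommGroup E] [NormedSpace ℝ E] [FiniteDimensional ℝ E]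

lemma card_le_of_isSeparated_of_dist_le {t : Finset E} {ε : ℝ≥0} {D : ℝ} (hε : 0 < ε)
    (hD0 : 0 ≤ D) (hsep : IsSeparated ε (t : Set E))
    (hD : ∀ x ∈ t, ∀ y ∈ t, dist x y ≤ D) :
    (t.card : ℝ) ≤ (1 + 2 * D / ε) ^ finrank ℝ E := by
  rcases t.eq_empty_or_nonempty with rfl | ⟨x₀, hx₀⟩
  · simp only [Finset.card_empty, Nat.cast_zero]
    positivity
  have hε' : (0 : ℝ) < ε := hε
  borelize E
  set μ : Measure E := (Module.finBasis ℝ E).addHaar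
  set V := μ (ball 0 1)
  have hball : ∀ x : E, ∀ r, 0 ≤ r → μ (closedBall x r) = ENNReal.ofReal (r ^ finrank ℝ E) * V :=
    fun x r hr => Measure.addHaar_closedBall μ x hr
  have hdisj : (t : Set E).PairwiseDisjoint (closedBall · (ε / 2)) := by
    intro p hp q hq hpq
    have hpq' : (ε : ℝ≥0∞) < edist p q := hsep hp hq hpq
    rw [edist_dist, ← ENNReal.ofReal_coe_nnreal,
      ENNReal.ofReal_lt_ofReal_iff_of_nonneg ε.coe_nonneg] at hpq'
    exact closedBall_disjoint_closedBall (by linarith)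
  have hsub : (⋃ p ∈ t, closedBall p (ε / 2)) ⊆ closedBall x₀ (D + ε / 2) :=
    Set.iUnion₂_subset fun p hp => closedBall_subset_closedBall' (by linarith [hD p hp x₀ hx₀])
  have hcell : ENNReal.ofReal ((ε / 2) ^ finrank ℝ E) * V ≠ 0 :=
    mul_ne_zero (by simp only [ne_eq, ENNReal.ofReal_eq_zero, not_le]; positivity)
      (measure_ball_pos μ 0 one_pos).ne'
  have hcell' : ENNReal.ofReal ((ε / 2) ^ finrank ℝ E) * V ≠ ⊤ :=
    ENNReal.mul_ne_top ENNReal.ofReal_ne_top measure_ball_lt_top.ne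
  have hvol : (t.card : ℝ≥0∞) * (ENNReal.ofReal ((ε / 2) ^ finrank ℝ E) * V) ≤
      ENNReal.ofReal ((1 + 2 * D / ε) ^ finrank ℝ E) *
        (ENNReal.ofReal ((ε / 2) ^ finrank ℝ E) * V) :=
    calc (t.card : ℝ≥0∞) * (ENNReal.ofReal ((ε / 2) ^ finrank ℝ E) * V)
        = ∑ p ∈ t, μ (closedBall p (ε / 2)) := by
          simp [hball _ _ (half_pos hε').le]
      _ = μ (⋃ p ∈ t, closedBall p (ε / 2)) :=
          (measure_biUnion_finset hdisj fun _ _ => measurableSet_closedBall).symm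
      _ ≤ μ (closedBall x₀ (D + ε / 2)) := measure_mono hsub
      _ = _ := by
          rw [hball _ _ (by positivity), ← mul_assoc, ← ENNReal.ofReal_mul (by positivity),
            ← mul_pow]
          congr 4
          field_simp
          ring
  rw [ENNReal.mul_le_mul_iff_left hcell hcell', ← ENNReal.ofReal_natCast,
    ENNReal.ofReal_le_ofReal_iff (by positivity)] at hvol
  exact hvol

lemma packingNumber_le_of_dist_le {A : Set E} {ε : ℝ≥0} {D : ℝ} (hε : 0 < ε) (hD0 : 0 ≤ D)
    (hD : ∀ x ∈ A, ∀ y ∈ A, dist x y ≤ D) :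
    packingNumber ε A ≤ ⌊(1 + 2 * D / ε) ^ finrank ℝ E⌋₊ := by
  refine iSup₂_le fun C hCA => iSup_le fun hC => ?_
  by_contra! hlt
  obtain ⟨t, htC, htcard⟩ := Set.exists_subset_encard_eq (Order.add_one_le_of_lt hlt)
  have htfin : t.Finite := Set.finite_of_encard_eq_coe htcard
  have hcard : htfin.toFinset.card = ⌊(1 + 2 * D / ε) ^ finrank ℝ E⌋₊ + 1 := by
    rw [← ENat.natCast_inj, ← htfin.encard_eq_coe_toFinset_card, htcard]
    rfl
  have hle := card_le_of_isSeparated_of_dist_le (t := htfin.toFinset) hε hD0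
    (by simpa using hC.subset htC)
    (fun x hx y hy => hD x (hCA (htC (by simpa using hx))) y (hCA (htC (by simpa using hy))))
  rw [hcard, Nat.cast_add, Nat.cast_one] at hle
  exact (Nat.lt_floor_add_one _).not_ge hle

end Volume

lemma coverNum_le_coveringNumber {Y : Type*} [PseudoMetricSpace Y] (s : Set Y) (ε : ℝ≥0) :
    coverNum s ε ≤ coveringNumber ε s := by
  rcases eq_or_ne (coveringNumber ε s) ⊤ with h | h
  · simp [h]
  obtain ⟨C, hCs, hCfin, hcov, hcard⟩ := exists_set_encard_eq_coveringNumber h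
  refine sInf_le ⟨hCfin.toFinset, ⟨by simpa using hCs, ?_⟩, ?_⟩
  · simpa [isCover_iff_subset_iUnion_closedBall] using hcov
  · rw [← hcard, hCfin.encard_eq_coe_toFinset_card]
    rfl

lemma coverNum_le_of_isometry {E Y : Type*} [NormedAddCommGroup E] [NormedSpace ℝ E]
    [FiniteDimensional ℝ E] [MetricSpace Y] {f : Y → E} (hf : Isometry f) {S : Set Y} {D : ℝ}
    (hD0 : 0 ≤ D) (hD : ∀ x ∈ S, ∀ y ∈ S, dist x y ≤ D) {ε : ℝ} (hε : 0 < ε) :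
    coverNum S ε ≤ ENNReal.ofReal ((1 + 2 * D / ε) ^ (finrank ℝ E : ℝ)) := by
  lift ε to ℝ≥0 using hε.le
  have hpack : coveringNumber ε S ≤ ⌊(1 + 2 * D / ε) ^ finrank ℝ E⌋₊ :=
    calc coveringNumber ε S = coveringNumber ε (f '' S) := hf.coveringNumber_image.symm
      _ ≤ packingNumber ε (f '' S) := coveringNumber_le_packingNumber _ _
      _ ≤ _ := packingNumber_le_of_dist_le (mod_cast hε) hD0 <| by
        rintro _ ⟨x, hx, rfl⟩ _ ⟨y, hy, rfl⟩
        rw [hf.dist_eq]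
        exact hD x hx y hy
  calc coverNum S ε ≤ coveringNumber ε S := coverNum_le_coveringNumber S ε
    _ ≤ (⌊(1 + 2 * D / ε) ^ finrank ℝ E⌋₊ : ℝ≥0∞) := by exact_mod_cast hpack
    _ ≤ _ := by
      rw [Real.rpow_natCast, ← ENNReal.ofReal_natCast]
      exact ENNReal.ofReal_le_ofReal (Nat.floor_le (by positivity))

theorem transfer_exponent_implies_alpha_family_general
    {E : Type*} [NormedAddCommGroup E] [NormedSpace ℝ E] [FiniteDimensional ℝ E]
    [MeasurableSpace E] [BorelSpace E]
    (dd : ℕ) (hdim : Module.finrank ℝ E = dd)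
    -- the state space `𝒳 ⋐ ℝ^𝖽` with diameter `D > 0`
    (X : Set E) (hXcpt : IsCompact X) (D : ℝ) (hD : 0 < D) (hdiam : Metric.diam X = D)
    (P Q : Kernel X X)
    (πP πQ : Measure X) [IsProbabilityMeasure πP] [IsProbabilityMeasure πQ]
    -- `π^P`, `π^Q` are invariant for `P`, `Q`
    (hinvP : πP.bind (fun x => P x) = πP)
    (hinvQ : πQ.bind (fun x => Q x) = πQ)
    -- kernel transfer exponent data: `(P,Q) ∈ 𝒯(γ,C,D)`
    (γ : ℝ) (C : ℝ) (hC : 0 < C)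
    (mP : ℕ) (εP : ℝ) (hεP0 : 0 < εP)
    (νP : Measure X)
    -- `ν^P` is a minorizing measure: `P^{m_P}(x,·) ≥ ε_P ν^P`
    (hminor : ∀ x : X, ∀ A : Set X, MeasurableSet A →
      ENNReal.ofReal εP * νP A ≤ kernelIter P mP x A)
    (mQ : ℕ)
    -- witnessing set `𝒳_Q ⋐ 𝒳`, carrying all `Q^{m_Q}(x,·)`
    (XQ : Set X) (hXQclosed : IsClosed XQ)
    (hQsupp : ∀ x : X, msupport (kernelIter Q mQ x) ⊆ XQ)
    -- `ν^P(B(x,h)) ≥ C (h/D)^γ Q^{m_Q}(y, B(x,h))` for `x, y ∈ 𝒳_Q`, `0 < h ≤ D`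
    (htransfer : ∀ x ∈ XQ, ∀ y ∈ XQ, ∀ h : ℝ, 0 < h → h ≤ D →
      ENNReal.ofReal (C * (h / D) ^ γ) * kernelIter Q mQ y (Metric.closedBall x h) ≤
        νP (Metric.closedBall x h))
    -- covering bound `N_{𝒳_Q}(ε) ≤ (1 + k_Q D/ε)^{𝖽_Q}` with `𝖽_Q ≤ 𝖽`, `k_Q ≥ 1`
    (dQ : ℝ) (hdQ0 : 0 ≤ dQ) (kQ : ℝ) (hkQ : 1 ≤ kQ)
    (hcov : ∀ ε : ℝ, 0 < ε → coverNum XQ ε ≤ ENNReal.ofReal ((1 + kQ * D / ε) ^ dQ)) :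
    (((dd : ℝ) ≤ γ + dQ →
        alphaFamilyCond D (γ + dQ) ((2 * kQ + 1) ^ dQ / (C * εP)) πP πQ) ∧
      (γ + dQ < (dd : ℝ) →
        alphaFamilyCond D (γ + dQ) ((2 * kQ + 1) ^ dQ / min (C * εP) 1) πP πQ ∧
          alphaFamilyCond D dQ ((2 * kQ + 1) ^ dQ / min (C * εP) 1) πQ πQ)) ∧
      alphaFamilyCond D (γ + (dd : ℝ)) ((9 : ℝ) ^ dd / (C * εP)) πP πQ := by
  subst hdim
  have hXQ : ∀ᵐ x ∂πQ, x ∈ XQ :=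
    ae_mem_of_bind_eq_self (bind_kernelIter_eq_self hinvQ mQ) hXQclosed.measurableSet hQsupp
  have hνP : ENNReal.ofReal εP • νP ≤ πP :=
    smul_le_of_bind_eq_self (bind_kernelIter_eq_self hinvP mP) hminor
  have hρ : ∀ h, 0 < h → h ≤ D →
      rhoSim πP πQ h ≤ (ENNReal.ofReal (C * εP * (h / D) ^ γ))⁻¹ * rhoSim πQ πQ h := by
    intro h h0 hhD
    have hc : ENNReal.ofReal εP * ENNReal.ofReal (C * (h / D) ^ γ) =
        ENNReal.ofReal (C * εP * (h / D) ^ γ) := by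
      rw [← ENNReal.ofReal_mul hεP0.le]
      ring_nf
    rw [← hc]
    refine rhoSim_le_of_transfer (bind_kernelIter_eq_self hinvQ mQ) hXQ ?_ ?_ hνP
      fun x hx y hy => htransfer x hx y hy h h0 hhD
    · exact hc ▸ (ENNReal.ofReal_pos.2 (by positivity)).ne'
    · exact hc ▸ ENNReal.ofReal_ne_top
  have hQQ : alphaFamilyCond D dQ ((2 * kQ + 1) ^ dQ) πQ πQ :=
    alphaFamilyCond_self_of_coverNum_le hXQ (by linarith) hdQ0 hcov
  have hQQvol : alphaFamilyCond D (finrank ℝ E) ((2 * 2 + 1) ^ (finrank ℝ E : ℝ)) πQ πQ :=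
    alphaFamilyCond_self_of_coverNum_le hXQ zero_le_two (Nat.cast_nonneg _) fun ε hε =>
      coverNum_le_of_isometry isometry_subtype_coe hD.le
        (fun x _ y _ => hdiam ▸ dist_le_diam_of_mem hXcpt.isBounded x.2 y.2) hε
  have hCε : 0 < C * εP := mul_pos hC hεP0
  have hmin : 0 < min (C * εP) 1 := lt_min hCε one_pos
  refine ⟨⟨fun _ => alphaFamilyCond_add_of_rhoSim_le hCε hρ hQQ, fun _ => ⟨?_, hQQ.mono ?_⟩⟩, ?_⟩
  · exact (alphaFamilyCond_add_of_rhoSim_le hCε hρ hQQ).mono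
      (div_le_div_of_nonneg_left (by positivity) hmin (min_le_left _ _))
  · exact le_div_self (by positivity) hmin (min_le_right _ _)
  · refine (alphaFamilyCond_add_of_rhoSim_le hCε hρ hQQvol).mono ?_
    rw [Real.rpow_natCast]
    gcongr
    norm_num

/-- If `(P,Q) ∈ 𝒯(γ,C,D)` on a compact `𝒳 ⊂ ℝ^𝖽` of diameter `D`, with
witnessing set `𝒳_Q` whose covering numbers satisfy
`N_{𝒳_Q}(ε) ≤ (1+k_Q D/ε)^{𝖽_Q}` (`𝖽_Q ≤ 𝖽`, `k_Q ≥ 1`), then the invariant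
distributions `(π^P,π^Q)` belong to `𝒟(γ+𝖽_Q, (2k_Q+1)^{𝖽_Q}/(Cε_P))` when
`γ+𝖽_Q ≥ 𝖽`, to `𝒟'(γ+𝖽_Q, 𝖽_Q, (2k_Q+1)^{𝖽_Q}/((Cε_P)∧1))` when `γ+𝖽_Q < 𝖽`,
and in any case to `𝒟(γ+𝖽, 9^𝖽/(Cε_P))`. -/
theorem transfer_exponent_implies_alpha_family
    {E : Type*} [NormedAddCommGroup E] [NormedSpace ℝ E] [FiniteDimensional ℝ E]
    [MeasurableSpace E] [BorelSpace E]
    (dd : ℕ) (hdim : Module.finrank ℝ E = dd)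
    -- the state space `𝒳 ⋐ ℝ^𝖽` with diameter `D > 0`
    (X : Set E) (hXcpt : IsCompact X) (D : ℝ) (hD : 0 < D) (hdiam : Metric.diam X = D)
    (P Q : Kernel X X) [IsMarkovKernel P] [IsMarkovKernel Q]
    (πP πQ : Measure X) [IsProbabilityMeasure πP] [IsProbabilityMeasure πQ]
    -- `π^P`, `π^Q` are invariant for `P`, `Q`
    (hinvP : πP.bind (fun x => P x) = πP)
    (hinvQ : πQ.bind (fun x => Q x) = πQ)
    -- kernel transfer exponent data: `(P,Q) ∈ 𝒯(γ,C,D)`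
    (γ : ℝ) (hγ : 0 ≤ γ) (C : ℝ) (hC : 0 < C)
    (mP : ℕ) (hmP : 1 ≤ mP) (εP : ℝ) (hεP0 : 0 < εP) (hεP1 : εP < 1)
    (νP : Measure X) [IsProbabilityMeasure νP]
    -- `ν^P` is a minorizing measure: `P^{m_P}(x,·) ≥ ε_P ν^P`
    (hminor : ∀ x : X, ∀ A : Set X, MeasurableSet A →
      ENNReal.ofReal εP * νP A ≤ kernelIter P mP x A)
    (mQ : ℕ) (hmQ : 1 ≤ mQ)
    -- witnessing set `𝒳_Q ⋐ 𝒳`, carrying all `Q^{m_Q}(x,·)`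
    (XQ : Set X) (hXQclosed : IsClosed XQ) (hXQcpt : IsCompact XQ)
    (hQsupp : ∀ x : X, msupport (kernelIter Q mQ x) ⊆ XQ)
    -- `ν^P(B(x,h)) ≥ C (h/D)^γ Q^{m_Q}(y, B(x,h))` for `x, y ∈ 𝒳_Q`, `0 < h ≤ D`
    (htransfer : ∀ x ∈ XQ, ∀ y ∈ XQ, ∀ h : ℝ, 0 < h → h ≤ D →
      ENNReal.ofReal (C * (h / D) ^ γ) * kernelIter Q mQ y (Metric.closedBall x h) ≤
        νP (Metric.closedBall x h))
    -- covering bound `N_{𝒳_Q}(ε) ≤ (1 + k_Q D/ε)^{𝖽_Q}` with `𝖽_Q ≤ 𝖽`, `k_Q ≥ 1`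
    (dQ : ℝ) (hdQ0 : 0 ≤ dQ) (hdQd : dQ ≤ (dd : ℝ)) (kQ : ℝ) (hkQ : 1 ≤ kQ)
    (hcov : ∀ ε : ℝ, 0 < ε → coverNum XQ ε ≤ ENNReal.ofReal ((1 + kQ * D / ε) ^ dQ)) :
    (((dd : ℝ) ≤ γ + dQ →
        alphaFamilyCond D (γ + dQ) ((2 * kQ + 1) ^ dQ / (C * εP)) πP πQ) ∧
      (γ + dQ < (dd : ℝ) →
        alphaFamilyCond D (γ + dQ) ((2 * kQ + 1) ^ dQ / min (C * εP) 1) πP πQ ∧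
          alphaFamilyCond D dQ ((2 * kQ + 1) ^ dQ / min (C * εP) 1) πQ πQ)) ∧
      alphaFamilyCond D (γ + (dd : ℝ)) ((9 : ℝ) ^ dd / (C * εP)) πP πQ :=
  transfer_exponent_implies_alpha_family_general dd hdim X hXcpt D hD hdiam P Q πP πQ hinvP hinvQ γ
    C hC mP εP hεP0 νP hminor mQ XQ hXQclosed hQsupp htransfer dQ hdQ0 kQ hkQ hcov
end

section
/- Let 𝒳 be compactly contained in ℝ^𝖽 with diameter D > 0 and metric d induced by a vector norm. Suppose (P,Q) ∈ 𝒯(γ,C,D) with minorizing measure ν^P satisfying P^{m_P}(x,·) ≥ ε_P ν^P(·) for all x ∈ 𝒳 (ε_P ∈ (0,1)), witnessing set 𝒳_Q, and let π^P, π^Q be invariant distributions of P and Q. Then the distribution pair (π^P, π^Q) has transfer exponent γ with constant C ε_P and radius D, i.e., C ε_P (h/D)^γ π^Q(B(x,h)) ≤ π^P(B(x,h)) for all x ∈ 𝒳_Q and all h ≤ D. -/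
/-!
Invariance of `π` under `K` passes to every iterate `K^m`, so `π(A) = ∫ K^m(y, A) dπ(y)`.
With `m = m_P`, the minorization gives `π^P(B) ≥ ε_P ν^P(B)`. With `m = m_Q`, every
`Q^{m_Q}(y,·)` is carried by the closed set `𝒳_Q` (in a second countable space a measure
is carried by its support), hence so is `π^Q`, and averaging the kernel transfer inequality
over `y ∼ π^Q` gives `C (h/D)^γ π^Q(B) ≤ ν^P(B)`. Chaining the two bounds proves the claim.
-/

open MeasureTheory ProbabilityTheory
open scoped ENNReal

theorem ae_mem_of_msupport_subset_s8 {X : Type*} [PseudoMetricSpace X] [SecondCountableTopology X]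
    [MeasurableSpace X] {μ : Measure X} {S : Set X} (hμ : msupport μ ⊆ S) :
    ∀ᵐ y ∂μ, y ∈ S := by
  refine measure_null_of_locally_null _ fun z hz => ?_
  have hz : z ∉ msupport μ := fun hmem => hz (hμ hmem)
  simp only [msupport, Set.mem_ofPred_eq, not_forall, not_lt, nonpos_iff_eq_zero] at hz
  obtain ⟨r, hr, hr_null⟩ := hz
  exact ⟨_, mem_nhdsWithin_of_mem_nhds (Metric.closedBall_mem_nhds z hr), hr_null⟩

namespace ProbabilityTheory.Kernel

variable {α : Type*} [MeasurableSpace α] {κ : Kernel α α} {μ : Measure α}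

theorem invariant_id : Invariant Kernel.id μ := Measure.bind_dirac

theorem Invariant.kernelIter (hκ : Invariant κ μ) (m : ℕ) : Invariant (kernelIter κ m) μ := by
  induction m with
  | zero => exact invariant_id
  | succ n ih => exact ih.comp hκ

theorem Invariant.apply_eq_lintegral (hκ : Invariant κ μ) {s : Set α} (hs : MeasurableSet s) :
    μ s = ∫⁻ x, κ x s ∂μ := by
  conv_lhs => rw [← hκ.def]
  exact Measure.bind_apply hs κ.aemeasurable

theorem Invariant.ae_mem (hκ : Invariant κ μ) {S : Set α} (hS : MeasurableSet S)
    (hκS : ∀ x, ∀ᵐ y ∂κ x, y ∈ S) : ∀ᵐ y ∂μ, y ∈ S := by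
  have hκS_null : ∀ x, κ x Sᶜ = 0 := fun x => ae_iff.mp (hκS x)
  refine ae_iff.mpr ?_
  change μ Sᶜ = 0
  rw [hκ.apply_eq_lintegral hS.compl]
  simp [hκS_null]

theorem Invariant.le_apply_of_forall_le [IsProbabilityMeasure μ] (hκ : Invariant κ μ)
    {s : Set α} (hs : MeasurableSet s) {c : ℝ≥0∞} (hc : ∀ x, c ≤ κ x s) : c ≤ μ s := by
  calc c = ∫⁻ _, c ∂μ := by simp
    _ ≤ ∫⁻ x, κ x s ∂μ := lintegral_mono hc
    _ = μ s := (hκ.apply_eq_lintegral hs).symm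

theorem Invariant.const_mul_apply_le_of_ae_le [IsProbabilityMeasure μ] (hκ : Invariant κ μ)
    {s : Set α} (hs : MeasurableSet s) {c d : ℝ≥0∞} (hd : ∀ᵐ x ∂μ, c * κ x s ≤ d) :
    c * μ s ≤ d := by
  calc c * μ s = ∫⁻ x, c * κ x s ∂μ := by
        rw [hκ.apply_eq_lintegral hs, lintegral_const_mul _ (κ.measurable_coe hs)]
    _ ≤ ∫⁻ _, d ∂μ := lintegral_mono_ae hd
    _ = d := by simp

end ProbabilityTheory.Kernel

theorem kernel_transfer_exponent_implies_distribution_transfer_exponent_general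
    {E : Type*} [NormedAddCommGroup E] [NormedSpace ℝ E] [FiniteDimensional ℝ E]
    [MeasurableSpace E] [BorelSpace E]
    (X : Set E) (D : ℝ)
    (P Q : Kernel X X)
    (πP πQ : Measure X) [IsProbabilityMeasure πP] [IsProbabilityMeasure πQ]
    -- `π^P`, `π^Q` are invariant for `P`, `Q`
    (hinvP : πP.bind (fun x => P x) = πP)
    (hinvQ : πQ.bind (fun x => Q x) = πQ)
    -- kernel transfer exponent data: `(P,Q) ∈ 𝒯(γ,C,D)`
    (γ : ℝ) (C : ℝ)
    (mP : ℕ) (εP : ℝ) (hεP0 : 0 < εP)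
    (νP : Measure X)
    -- `ν^P` is a minorizing measure: `P^{m_P}(x,·) ≥ ε_P ν^P`
    (hminor : ∀ x : X, ∀ A : Set X, MeasurableSet A →
      ENNReal.ofReal εP * νP A ≤ kernelIter P mP x A)
    (mQ : ℕ)
    (XQ : Set X) (hXQclosed : IsClosed XQ)
    -- `supp Q^{m_Q}(x,·) ⊆ 𝒳_Q` for all `x ∈ 𝒳`
    (hQsupp : ∀ x : X, msupport (kernelIter Q mQ x) ⊆ XQ)
    -- `ν^P(B(x,h)) ≥ C (h/D)^γ Q^{m_Q}(y, B(x,h))` for `x, y ∈ 𝒳_Q`, `0 < h ≤ D`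
    (htransfer : ∀ x ∈ XQ, ∀ y ∈ XQ, ∀ h : ℝ, 0 < h → h ≤ D →
      ENNReal.ofReal (C * (h / D) ^ γ) * kernelIter Q mQ y (Metric.closedBall x h) ≤
        νP (Metric.closedBall x h)) :
    ∀ x ∈ XQ, ∀ h : ℝ, 0 < h → h ≤ D →
      ENNReal.ofReal (C * εP * (h / D) ^ γ) * πQ (Metric.closedBall x h) ≤
        πP (Metric.closedBall x h) := by
  intro x hx h hh0 hhD
  set B := Metric.closedBall x h
  have hB : MeasurableSet B := measurableSet_closedBall
  have hπP_iter := Kernel.Invariant.kernelIter hinvP mP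
  have hπQ_iter := Kernel.Invariant.kernelIter hinvQ mQ
  have hπQ_XQ : ∀ᵐ y ∂πQ, y ∈ XQ :=
    hπQ_iter.ae_mem hXQclosed.measurableSet fun y => ae_mem_of_msupport_subset_s8 (hQsupp y)
  have hνP : ENNReal.ofReal (C * (h / D) ^ γ) * πQ B ≤ νP B :=
    hπQ_iter.const_mul_apply_le_of_ae_le hB
      (hπQ_XQ.mono fun y hy => htransfer x hx y hy h hh0 hhD)
  have hπP : ENNReal.ofReal εP * νP B ≤ πP B :=
    hπP_iter.le_apply_of_forall_le hB fun y => hminor y _ hB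
  calc ENNReal.ofReal (C * εP * (h / D) ^ γ) * πQ B
      = ENNReal.ofReal εP * (ENNReal.ofReal (C * (h / D) ^ γ) * πQ B) := by
        rw [← mul_assoc, ← ENNReal.ofReal_mul hεP0.le, mul_left_comm, mul_assoc]
    _ ≤ ENNReal.ofReal εP * νP B := by gcongr
    _ ≤ πP B := hπP

/-- If `(P,Q) ∈ 𝒯(γ,C,D)` (kernel transfer exponent `γ` with constant `C` and
radius `D = diam 𝒳`, witnessed by a minorizing measure `ν^P` with `P^{m_P} ≥ ε_P ν^P`,
and a closed set `𝒳_Q` carrying all `Q^{m_Q}(x,·)`), then the invariant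
distributions satisfy `C ε_P (h/D)^γ π^Q(B(x,h)) ≤ π^P(B(x,h))` for all
`x ∈ 𝒳_Q` and `0 < h ≤ D`, i.e. `(π^P,π^Q)` has transfer exponent `γ` with
constant `C ε_P` and radius `D`. -/
theorem kernel_transfer_exponent_implies_distribution_transfer_exponent
    {E : Type*} [NormedAddCommGroup E] [NormedSpace ℝ E] [FiniteDimensional ℝ E]
    [MeasurableSpace E] [BorelSpace E]
    (dd : ℕ) (hdim : Module.finrank ℝ E = dd)
    -- the state space `𝒳 ⋐ ℝ^𝖽` with diameter `D > 0`
    (X : Set E) (hXcpt : IsCompact X) (D : ℝ) (hD : 0 < D) (hdiam : Metric.diam X = D)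
    (P Q : Kernel X X) [IsMarkovKernel P] [IsMarkovKernel Q]
    (πP πQ : Measure X) [IsProbabilityMeasure πP] [IsProbabilityMeasure πQ]
    -- `π^P`, `π^Q` are invariant for `P`, `Q`
    (hinvP : πP.bind (fun x => P x) = πP)
    (hinvQ : πQ.bind (fun x => Q x) = πQ)
    -- kernel transfer exponent data: `(P,Q) ∈ 𝒯(γ,C,D)`
    (γ : ℝ) (hγ : 0 ≤ γ) (C : ℝ) (hC : 0 < C)
    (mP : ℕ) (hmP : 1 ≤ mP) (εP : ℝ) (hεP0 : 0 < εP) (hεP1 : εP < 1)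
    (νP : Measure X) [IsProbabilityMeasure νP]
    -- `ν^P` is a minorizing measure: `P^{m_P}(x,·) ≥ ε_P ν^P`
    (hminor : ∀ x : X, ∀ A : Set X, MeasurableSet A →
      ENNReal.ofReal εP * νP A ≤ kernelIter P mP x A)
    (mQ : ℕ) (hmQ : 1 ≤ mQ)
    (XQ : Set X) (hXQclosed : IsClosed XQ)
    -- `supp Q^{m_Q}(x,·) ⊆ 𝒳_Q` for all `x ∈ 𝒳`
    (hQsupp : ∀ x : X, msupport (kernelIter Q mQ x) ⊆ XQ)
    -- `ν^P(B(x,h)) ≥ C (h/D)^γ Q^{m_Q}(y, B(x,h))` for `x, y ∈ 𝒳_Q`, `0 < h ≤ D`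
    (htransfer : ∀ x ∈ XQ, ∀ y ∈ XQ, ∀ h : ℝ, 0 < h → h ≤ D →
      ENNReal.ofReal (C * (h / D) ^ γ) * kernelIter Q mQ y (Metric.closedBall x h) ≤
        νP (Metric.closedBall x h)) :
    ∀ x ∈ XQ, ∀ h : ℝ, 0 < h → h ≤ D →
      ENNReal.ofReal (C * εP * (h / D) ^ γ) * πQ (Metric.closedBall x h) ≤
        πP (Metric.closedBall x h) :=
  kernel_transfer_exponent_implies_distribution_transfer_exponent_general X D P Q πP πQ hinvP hinvQ
    γ C mP εP hεP0 νP hminor mQ XQ hXQclosed hQsupp htransfer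
end
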